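/- Fix n ≥ 2 and k ≥ 1. The proportion a_p of pairs (x, y) ∈ G_p × G_p such that the reduced word of x has length at least k with k-th letter a_1^{−1}, and the reduced word of y has length at least k+1 with first k+1 letters equal to the first k letters of the reduced word of x followed by a_2, is monotone nondecreasing in p: a_p ≤ a_{p+1} for all p ≥ 1. -/

import Mathlib

/-- `Gcard n p` is the number of elements of the rank-`n` free group whose reduced word
has length at most `p` (the cardinality of `G_p`). -/
noncomputable def Gcard (n p : ℕ) : ℕ :=
  {w : FreeGroup (Fin n) | w.toWord.length ≤ p}.ncard

/-- `Scard n k p = |G_p| − |G_{k−1}|` is the number of elements of the rank-`n` free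
group whose reduced word has length between `k` and `p`. -/
noncomputable def Scard (n k p : ℕ) : ℕ := Gcard n p - Gcard n (k - 1)

/-- `Wcard n k = 2n(2n−1)^{k−1}` is the number of elements of the rank-`n` free group
whose reduced word has length exactly `k` (for `k ≥ 1`). -/
def Wcard (n k : ℕ) : ℕ := 2 * n * (2 * n - 1) ^ (k - 1)

/-!
Identify group elements with reduced words and put `q = 2n - 1`, `S m = 1 + q + ⋯ + q^(m-1)`.
For `p = k + t + 1` a pair in `P p` consists of a reduced prefix `u` of length `k` ending in
`a₁⁻¹`, an extension of `u` by at most `t + 1` letters and an extension of `u a₂` by at most `t`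
letters. Every nonempty reduced word can be continued by exactly `q` letters, so
`|P p| = c · S (t + 2) · S (t + 1)` for a constant `c`, while `|G_(p+1)| = q |G_p| + 2`. After
cancelling `S (t + 2)`, `a_p ≤ a_(p+1)` becomes `S (t + 1) (q |G_p| + 2)² ≤ S (t + 3) |G_p|²`,
which holds because `|G_p| > (q + 1) S (t + 2)`. For `p ≤ k` the set `P p` is empty.
-/

open Finset

theorem List.exists_prefix_append_singleton_prefix_iff {β : Type*} {x y : List β} {g h : β}
    {k : ℕ} (hk : k ≠ 0) :
    (∃ u, u.length = k ∧ u.getLast? = some g ∧ u <+: x ∧ u ++ [h] <+: y) ↔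
      k ≤ x.length ∧ x[k - 1]? = some g ∧ k + 1 ≤ y.length ∧
        y.take (k + 1) = x.take k ++ [h] := by
  constructor
  · rintro ⟨u, rfl, hg, hx, hy⟩
    have hux : x.take u.length = u := (prefix_iff_eq_take.mp hx).symm
    have hy' := prefix_iff_eq_take.mp hy
    simp only [length_append, length_singleton] at hy hy'
    refine ⟨hx.length_le, ?_, by simpa using hy.length_le, by rw [hux, ← hy']⟩
    rw [← getElem?_take_of_lt (j := u.length) (by omega), hux, ← hg, getLast?_eq_getElem?]
  · rintro ⟨hkx, hg, -, hy⟩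
    refine ⟨x.take k, by simpa using hkx, ?_, take_prefix _ _, hy ▸ take_prefix _ _⟩
    simp [getLast?_take, hk, hg]

theorem geom_sum_mul_sq_le {q G t : ℕ} (hq : 1 ≤ q)
    (hG : (q + 1) * ∑ i ∈ range (t + 2), q ^ i < G) :
    (∑ i ∈ range (t + 2), q ^ i) * (∑ i ∈ range (t + 1), q ^ i) * (q * G + 2) ^ 2 ≤
      (∑ i ∈ range (t + 3), q ^ i) * (∑ i ∈ range (t + 2), q ^ i) * G ^ 2 := by
  rw [geom_sum_succ (n := t + 2), geom_sum_succ (n := t + 1)] at *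
  generalize ∑ i ∈ range (t + 1), q ^ i = A at *
  have key : A * (q * G + 2) ^ 2 ≤ (q * (q * A + 1) + 1) * G ^ 2 := by
    have h1 : (q + 1) * ((q + 1) * (q * A + 1) + 1) * G ≤ (q + 1) * G * G :=
      Nat.mul_le_mul_right G (Nat.mul_le_mul_left _ hG)
    have h2 : 4 * (q * A * G) ≤ (q + 1) * (q + 1) * (q * A * G) :=
      Nat.mul_le_mul_right _ (by nlinarith)
    have h3 : A ≤ G := by nlinarith [Nat.mul_le_mul_right A hq]
    have h4 : 4 * G ≤ (q + 1) * (q + 1) * G := Nat.mul_le_mul_right _ (by nlinarith)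
    nlinarith
  calc (q * A + 1) * A * (q * G + 2) ^ 2 = (q * A + 1) * (A * (q * G + 2) ^ 2) := by ring
    _ ≤ (q * A + 1) * ((q * (q * A + 1) + 1) * G ^ 2) := Nat.mul_le_mul_left _ key
    _ = _ := by ring

namespace FreeGroup

variable {α : Type*}

theorem isReduced_append_singleton {L : List (α × Bool)} {x : α × Bool} :
    IsReduced (L ++ [x]) ↔ IsReduced L ∧ ∀ c ∈ L.getLast?, c.1 = x.1 → c.2 = x.2 := by
  simp [IsReduced, List.isChain_append]

variable [DecidableEq α]

theorem range_toWord :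
    Set.range (toWord : FreeGroup α → List (α × Bool)) = {L | IsReduced L} := by
  ext L
  refine ⟨?_, fun hL => ⟨mk L, by rw [toWord_mk, hL.reduce_eq]⟩⟩
  rintro ⟨w, rfl⟩
  exact isReduced_toWord

theorem ncard_preimage_toWord {F : Finset (List (α × Bool))} (hF : ∀ L ∈ F, IsReduced L) :
    (toWord ⁻¹' (F : Set (List (α × Bool)))).ncard = #F := by
  rw [Set.ncard_preimage_of_injective_subset_range toWord_injective
    (by rw [range_toWord]; exact hF), Set.ncard_coe_finset]

theorem ncard_preimage_prodMap_toWord {F : Finset (List (α × Bool) × List (α × Bool))}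
    (hF : ∀ L ∈ F, IsReduced L.1 ∧ IsReduced L.2) :
    (Prod.map toWord toWord ⁻¹' (F : Set (List (α × Bool) × List (α × Bool)))).ncard = #F := by
  rw [Set.ncard_preimage_of_injective_subset_range (toWord_injective.prodMap toWord_injective)
    (by rw [Set.range_prodMap, range_toWord]; exact hF), Set.ncard_coe_finset]

variable [Fintype α]

def nextLetters (L : List (α × Bool)) : Finset (α × Bool) :=
  {x | ∀ c ∈ L.getLast?, c.1 = x.1 → c.2 = x.2}

theorem isReduced_append_singleton_iff_mem_nextLetters {L : List (α × Bool)} {x : α × Bool} :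
    IsReduced (L ++ [x]) ↔ IsReduced L ∧ x ∈ nextLetters L := by
  simp [nextLetters, isReduced_append_singleton]

theorem card_nextLetters {L : List (α × Bool)} (hL : L ≠ []) :
    #(nextLetters L) = 2 * Fintype.card α - 1 := by
  obtain ⟨L, c, rfl⟩ := L.eq_nil_or_concat'.resolve_left hL
  have : nextLetters (L ++ [c]) = univ.erase (c.1, !c.2) := by
    ext ⟨a, b⟩
    simp only [nextLetters, List.getLast?_concat, mem_filter, mem_univ, true_and, mem_erase,
      Option.mem_def, Option.some.injEq, forall_eq', ne_eq, Prod.mk.injEq, and_true]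
    cases b <;> cases c.2 <;> simp [eq_comm]
  rw [this, card_erase_of_mem (mem_univ _), card_univ, Fintype.card_prod, Fintype.card_bool,
    mul_comm]

def reducedExtensions (u : List (α × Bool)) : ℕ → Finset (List (α × Bool))
  | 0 => {u}
  | t + 1 => (reducedExtensions u t).biUnion fun l => (nextLetters l).image (l ++ [·])

theorem prefix_of_mem_reducedExtensions {u l : List (α × Bool)} {t : ℕ}
    (hl : l ∈ reducedExtensions u t) : u <+: l ∧ l.length = u.length + t := by
  induction t generalizing l with
  | zero => simp_all [reducedExtensions]
  | succ t ih =>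
    simp only [reducedExtensions, mem_biUnion, mem_image] at hl
    obtain ⟨l, hl, x, -, rfl⟩ := hl
    obtain ⟨hpre, hlen⟩ := ih hl
    exact ⟨hpre.trans (List.prefix_append _ _), by simp [hlen, add_assoc]⟩

theorem mem_reducedExtensions {u l : List (α × Bool)} (hu : IsReduced u) {t : ℕ} :
    l ∈ reducedExtensions u t ↔ IsReduced l ∧ u <+: l ∧ l.length = u.length + t := by
  induction t generalizing l with
  | zero =>
    simp only [reducedExtensions, mem_singleton, add_zero]
    refine ⟨by rintro rfl; exact ⟨hu, List.prefix_rfl, rfl⟩, fun ⟨_, hpre, hlen⟩ => ?_⟩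
    exact (hpre.eq_of_length hlen.symm).symm
  | succ t ih =>
    simp only [reducedExtensions, mem_biUnion, mem_image]
    constructor
    · rintro ⟨l, hl, x, hx, rfl⟩
      obtain ⟨hred, hpre, hlen⟩ := ih.mp hl
      exact ⟨isReduced_append_singleton_iff_mem_nextLetters.mpr ⟨hred, hx⟩,
        hpre.trans (List.prefix_append _ _), by simp [hlen, add_assoc]⟩
    · rintro ⟨hred, hpre, hlen⟩
      obtain ⟨l, x, rfl⟩ := l.eq_nil_or_concat'.resolve_left (by rintro rfl; simp at hlen)
      obtain ⟨hred, hx⟩ := isReduced_append_singleton_iff_mem_nextLetters.mp hred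
      simp only [List.length_append, List.length_singleton] at hlen
      refine ⟨l, ih.mpr ⟨hred, ?_, by omega⟩, x, hx, rfl⟩
      exact List.prefix_of_prefix_length_le hpre (List.prefix_append _ _) (by omega)

theorem card_reducedExtensions_succ {u : List (α × Bool)} {t : ℕ} (h : u ≠ [] ∨ t ≠ 0) :
    #(reducedExtensions u (t + 1)) = (2 * Fintype.card α - 1) * #(reducedExtensions u t) := by
  have hdisj : (reducedExtensions u t : Set (List (α × Bool))).PairwiseDisjoint
      fun l => (nextLetters l).image (l ++ [·]) := by
    intro l₁ _ l₂ _ hne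
    simp only [Function.onFun, disjoint_left, mem_image]
    rintro _ ⟨x, -, rfl⟩ ⟨y, -, hxy⟩
    exact hne (List.append_inj_left' hxy rfl).symm
  have hcard (l) (hl : l ∈ reducedExtensions u t) :
      #((nextLetters l).image (l ++ [·])) = 2 * Fintype.card α - 1 := by
    rw [card_image_of_injective _ fun _ _ h => by simpa using h, card_nextLetters]
    rintro rfl
    have : u.length + t = 0 := by simpa using (prefix_of_mem_reducedExtensions hl).2.symm
    rcases h with h | h <;> simp_all
  rw [reducedExtensions, card_biUnion hdisj, sum_congr rfl hcard, sum_const, smul_eq_mul,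
    mul_comm]

theorem card_reducedExtensions {u : List (α × Bool)} (hu : u ≠ []) (t : ℕ) :
    #(reducedExtensions u t) = (2 * Fintype.card α - 1) ^ t := by
  induction t with
  | zero => simp [reducedExtensions]
  | succ t ih => rw [card_reducedExtensions_succ (.inl hu), ih, pow_succ, mul_comm]

theorem card_reducedExtensions_nil_succ (t : ℕ) :
    #(reducedExtensions ([] : List (α × Bool)) (t + 1)) =
      2 * Fintype.card α * (2 * Fintype.card α - 1) ^ t := by
  induction t with
  | zero =>
    simp [reducedExtensions, nextLetters, card_image_of_injective _ List.singleton_injective,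
      mul_comm]
  | succ t ih => rw [card_reducedExtensions_succ (.inr t.succ_ne_zero), ih, pow_succ]; ring

def extensionsLE (u : List (α × Bool)) (m : ℕ) : Finset (List (α × Bool)) :=
  (range (m + 1)).biUnion (reducedExtensions u)

theorem mem_extensionsLE {u l : List (α × Bool)} (hu : IsReduced u) {m : ℕ} :
    l ∈ extensionsLE u m ↔ IsReduced l ∧ u <+: l ∧ l.length ≤ u.length + m := by
  simp only [extensionsLE, mem_biUnion, mem_range, mem_reducedExtensions hu]
  constructor
  · rintro ⟨t, ht, hred, hpre, hlen⟩
    exact ⟨hred, hpre, by omega⟩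
  · rintro ⟨hred, hpre, hlen⟩
    exact ⟨l.length - u.length, by omega, hred, hpre, by have := hpre.length_le; omega⟩

theorem card_extensionsLE_eq_sum (u : List (α × Bool)) (m : ℕ) :
    #(extensionsLE u m) = ∑ t ∈ range (m + 1), #(reducedExtensions u t) := by
  refine card_biUnion fun t _ t' _ hne => disjoint_left.mpr fun l hl hl' => hne ?_
  have := (prefix_of_mem_reducedExtensions hl).2
  have := (prefix_of_mem_reducedExtensions hl').2
  omega

theorem card_extensionsLE {u : List (α × Bool)} (hu : u ≠ []) (m : ℕ) :
    #(extensionsLE u m) = ∑ i ∈ range (m + 1), (2 * Fintype.card α - 1) ^ i := by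
  simp only [card_extensionsLE_eq_sum, card_reducedExtensions hu]

theorem card_extensionsLE_nil (m : ℕ) :
    #(extensionsLE ([] : List (α × Bool)) m) =
      1 + 2 * Fintype.card α * ∑ i ∈ range m, (2 * Fintype.card α - 1) ^ i := by
  simp only [card_extensionsLE_eq_sum, sum_range_succ', card_reducedExtensions_nil_succ,
    mul_sum]
  simp [reducedExtensions, add_comm]

theorem ncard_setOf_length_toWord_le (p : ℕ) :
    {w : FreeGroup α | w.toWord.length ≤ p}.ncard =
      1 + 2 * Fintype.card α * ∑ i ∈ range p, (2 * Fintype.card α - 1) ^ i := by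
  rw [← card_extensionsLE_nil, ← ncard_preimage_toWord fun L hL =>
    ((mem_extensionsLE IsReduced.nil).mp hL).1]
  congr
  ext w
  simp [mem_extensionsLE IsReduced.nil, isReduced_toWord]

def prefixPairs (g h : α × Bool) (k p : ℕ) : Finset (List (α × Bool) × List (α × Bool)) :=
  ((reducedExtensions [] k).filter (·.getLast? = some g)).biUnion fun u =>
    extensionsLE u (p - k) ×ˢ extensionsLE (u ++ [h]) (p - (k + 1))

theorem mem_prefixPairs {g h : α × Bool} (hgh : g.1 = h.1 → g.2 = h.2) {k p : ℕ} (hp : k < p)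
    {x y : List (α × Bool)} :
    (x, y) ∈ prefixPairs g h k p ↔ IsReduced x ∧ IsReduced y ∧ x.length ≤ p ∧ y.length ≤ p ∧
      ∃ u, u.length = k ∧ u.getLast? = some g ∧ u <+: x ∧ u ++ [h] <+: y := by
  simp only [prefixPairs, mem_biUnion, mem_filter, mem_product,
    mem_reducedExtensions IsReduced.nil, List.nil_prefix, true_and, List.length_nil, zero_add]
  constructor
  · rintro ⟨u, ⟨⟨hu, hlen⟩, hg⟩, hx, hy⟩
    have huh : IsReduced (u ++ [h]) := isReduced_append_singleton.mpr ⟨hu, by simpa [hg]⟩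
    obtain ⟨hx, hux, hxp⟩ := (mem_extensionsLE hu).mp hx
    obtain ⟨hy, huy, hyp⟩ := (mem_extensionsLE huh).mp hy
    simp only [List.length_append, List.length_singleton] at hyp
    exact ⟨hx, hy, by omega, by omega, u, hlen, hg, hux, huy⟩
  · rintro ⟨hx, hy, hxp, hyp, u, hlen, hg, hux, huy⟩
    have hu := hx.infix hux.isInfix
    have huh := hy.infix huy.isInfix
    refine ⟨u, ⟨⟨hu, hlen⟩, hg⟩, (mem_extensionsLE hu).mpr ⟨hx, hux, by omega⟩,
      (mem_extensionsLE huh).mpr ⟨hy, huy, by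
        simp only [List.length_append, List.length_singleton]; omega⟩⟩

theorem card_prefixPairs {g h : α × Bool} {k : ℕ} (hk : k ≠ 0) (t : ℕ) :
    #(prefixPairs g h k (k + t + 1)) =
      #((reducedExtensions [] k).filter (·.getLast? = some g)) *
      ((∑ i ∈ range (t + 2), (2 * Fintype.card α - 1) ^ i) *
        ∑ i ∈ range (t + 1), (2 * Fintype.card α - 1) ^ i) := by
  have hdisj : ((reducedExtensions [] k).filter (·.getLast? = some g) :
      Set (List (α × Bool))).PairwiseDisjoint fun u =>
        extensionsLE u (k + t + 1 - k) ×ˢ extensionsLE (u ++ [h]) (k + t + 1 - (k + 1)) := by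
    intro u₁ hu₁ u₂ hu₂ hne
    simp only [coe_filter, Set.mem_ofPred_eq, mem_reducedExtensions IsReduced.nil] at hu₁ hu₂
    simp only [Function.onFun, disjoint_left, mem_product, mem_extensionsLE hu₁.1.1,
      mem_extensionsLE hu₂.1.1]
    rintro ⟨x, y⟩ ⟨⟨-, hx₁, -⟩, -⟩ ⟨⟨-, hx₂, -⟩, -⟩
    rw [List.prefix_iff_eq_take] at hx₁ hx₂
    exact hne (by rw [hx₁, hx₂, hu₁.1.2.2, hu₂.1.2.2])
  rw [prefixPairs, card_biUnion hdisj, ← smul_eq_mul, ← sum_const]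
  refine sum_congr rfl fun u hu => ?_
  have hu : u ≠ [] := by
    rintro rfl
    simp [mem_reducedExtensions IsReduced.nil, eq_comm, hk] at hu
  rw [card_product, card_extensionsLE hu, card_extensionsLE (by simp)]
  congr 3 <;> omega

theorem ncard_setOf_toWord_prefix_pairs {g h : α × Bool} (hgh : g.1 = h.1 → g.2 = h.2)
    {k p : ℕ} (hk : k ≠ 0) (hp : k < p) :
    {xy : FreeGroup α × FreeGroup α | xy.1.toWord.length ≤ p ∧ xy.2.toWord.length ≤ p ∧
      k ≤ xy.1.toWord.length ∧ xy.1.toWord[k - 1]? = some g ∧ k + 1 ≤ xy.2.toWord.length ∧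
      xy.2.toWord.take (k + 1) = xy.1.toWord.take k ++ [h]}.ncard = #(prefixPairs g h k p) := by
  rw [← ncard_preimage_prodMap_toWord fun _ hL =>
    ((mem_prefixPairs hgh hp).mp hL).imp_right And.left]
  congr 1
  ext ⟨v, w⟩
  simp [mem_prefixPairs hgh hp, isReduced_toWord, List.exists_prefix_append_singleton_prefix_iff hk]

end FreeGroup

theorem Gcard_eq_one_add_mul_geom_sum (n p : ℕ) :
    Gcard n p = 1 + 2 * n * ∑ i ∈ range p, (2 * n - 1) ^ i := by
  rw [Gcard]
  simpa using FreeGroup.ncard_setOf_length_toWord_le (α := Fin n) p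

theorem Gcard_succ {n : ℕ} (hn : n ≠ 0) (p : ℕ) :
    Gcard n (p + 1) = (2 * n - 1) * Gcard n p + 2 := by
  rw [Gcard_eq_one_add_mul_geom_sum, Gcard_eq_one_add_mul_geom_sum, geom_sum_succ]
  obtain ⟨q, hq⟩ : ∃ q, 2 * n = q + 1 := ⟨2 * n - 1, by omega⟩
  rw [hq, Nat.add_sub_cancel]
  ring

/-- Fix `n ≥ 2` and `k ≥ 1`. The proportion `a_p` of pairs `(x, y) ∈ G_p × G_p` such
that the reduced word of `x` has length at least `k` with `k`-th letter `a₁⁻¹`, and the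
reduced word of `y` has length at least `k+1` with first `k+1` letters equal to the
first `k` letters of the reduced word of `x` followed by `a₂`, is monotone nondecreasing
in `p`: `a_p ≤ a_{p+1}` for all `p ≥ 1`. -/
theorem proportion_case_one_nondecreasing (n k : ℕ) (hn : 2 ≤ n) (hk : 1 ≤ k)
    (P : ℕ → Set (FreeGroup (Fin n) × FreeGroup (Fin n)))
    (hP : ∀ p : ℕ, P p = {xy | xy.1.toWord.length ≤ p ∧ xy.2.toWord.length ≤ p ∧
      k ≤ xy.1.toWord.length ∧
      xy.1.toWord[k - 1]? = some (⟨0, by omega⟩, false) ∧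
      k + 1 ≤ xy.2.toWord.length ∧
      xy.2.toWord.take (k + 1) = xy.1.toWord.take k ++ [(⟨1, by omega⟩, true)]})
    (a : ℕ → ℝ) (ha : ∀ p : ℕ, a p = ((P p).ncard : ℝ) / ((Gcard n p : ℝ) ^ 2)) :
    ∀ p : ℕ, 1 ≤ p → a p ≤ a (p + 1) := by
  intro p _
  have hG (r : ℕ) : (0 : ℝ) < Gcard n r ^ 2 := by rw [Gcard_eq_one_add_mul_geom_sum]; positivity
  rw [ha, ha, div_le_div_iff₀ (hG p) (hG (p + 1))]
  rcases le_or_gt p k with hpk | hpk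
  · have : P p = ∅ := by
      rw [hP, Set.eq_empty_iff_forall_notMem]
      rintro xy ⟨-, hy, -, -, hky, -⟩
      omega
    rw [this, Set.ncard_empty, Nat.cast_zero, zero_mul]
    positivity
  · obtain ⟨t, rfl⟩ : ∃ t, p = k + t + 1 := ⟨p - k - 1, by omega⟩
    have hgh : ((⟨0, by omega⟩ : Fin n), false).1 = ((⟨1, by omega⟩ : Fin n), true).1 →
        false = true := by simp
    have hGt : (2 * n - 1 + 1) * ∑ i ∈ range (t + 2), (2 * n - 1) ^ i < Gcard n (k + t + 1) := by
      rw [Gcard_eq_one_add_mul_geom_sum, Nat.sub_add_cancel (by omega), Nat.lt_one_add_iff]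
      exact Nat.mul_le_mul_left _ (sum_le_sum_of_subset (range_subset_range.mpr (by omega)))
    rw [hP, hP, FreeGroup.ncard_setOf_toWord_prefix_pairs hgh (by omega) (by omega),
      FreeGroup.ncard_setOf_toWord_prefix_pairs hgh (by omega) (by omega), Gcard_succ (by omega),
      show k + t + 1 + 1 = k + (t + 1) + 1 by ring, FreeGroup.card_prefixPairs (by omega),
      FreeGroup.card_prefixPairs (by omega), Fintype.card_fin]
    norm_cast
    simpa only [mul_assoc] using Nat.mul_le_mul_left _ (geom_sum_mul_sq_le (by omega) hGt)
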